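/- arXiv:2605.28529 — 2 statements merged into one kernel-verified Lean document; each statement's English description precedes it below -/
import Mathlib

section
/- The Myerson interaction index satisfies component efficiency: for any game v, graph Γ, and connected component C of Γ, Σ_{i ∈ C} MI^{v,Γ}({i}) = v(C). -/
/-!
The restricted game `v^Γ` is additive across the connected components of `Γ`: for a component
`C`, `v^Γ(R) = v^Γ(R ∩ C) + v^Γ(R \ C)`. Consequently every coalition meeting both `C` and its
complement has Harsanyi dividend zero, since some member of it is a null player of each summand.
As `MI^{v,Γ}({i}) = Σ_{T ∋ i} Δ(T) / |T|`, summing over `i ∈ C` therefore collects exactly the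
dividends of the coalitions inside `C`, and Möbius inversion gives `Σ_{T ⊆ C} Δ(T) = v^Γ(C) = v(C)`.
-/

open Finset

noncomputable section
open scoped Classical

namespace TUGame

variable {ι : Type*} [Fintype ι] [DecidableEq ι]

/-- Harsanyi dividend of coalition `T` in game `v`. -/
def dividend (v : Finset ι → ℝ) (T : Finset ι) : ℝ :=
  ∑ R ∈ T.powerset, (-1 : ℝ) ^ (T.card - R.card) * v R

/-- Unanimity game of coalition `T`. -/
def unanimity (T S : Finset ι) : ℝ := if T ⊆ S then 1 else 0

/-- Shapley value of player `i` in game `v`. -/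
def shapley (v : Finset ι → ℝ) (i : ι) : ℝ :=
  ∑ S ∈ Finset.univ.powerset.filter (fun S => i ∈ S),
    (((S.card - 1).factorial * (Fintype.card ι - S.card).factorial : ℕ) : ℝ) /
      (((Fintype.card ι).factorial : ℕ) : ℝ) * (v S - v (S.erase i))

/-- Shapley interaction index, defined via discrete derivatives. -/
def SIderiv (v : Finset ι → ℝ) (S : Finset ι) : ℝ :=
  ∑ T ∈ (Finset.univ \ S).powerset,
    (((Fintype.card ι - T.card - S.card).factorial * T.card.factorial : ℕ) : ℝ) /
      (((Fintype.card ι - S.card + 1).factorial : ℕ) : ℝ) *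
    ∑ L ∈ S.powerset, (-1 : ℝ) ^ (S.card - L.card) * v (T ∪ L)

/-- Shapley interaction index, expressed via Harsanyi dividends. -/
def SIdiv (v : Finset ι → ℝ) (S : Finset ι) : ℝ :=
  ∑ T ∈ Finset.univ.powerset.filter (fun T => S ⊆ T),
    dividend v T / ((T.card - S.card + 1 : ℕ) : ℝ)

/-- The subgraph of `G` induced by the coalition `S` (as a graph on the same vertex set). -/
def restrict (G : SimpleGraph ι) (S : Finset ι) : SimpleGraph ι where
  Adj i j := G.Adj i j ∧ i ∈ S ∧ j ∈ S
  symm := ⟨fun i j h => ⟨h.1.symm, h.2.2, h.2.1⟩⟩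
  loopless := ⟨fun i h => G.irrefl h.1⟩

/-- Connected component of `i` in the subgraph induced by `S`. -/
def comp (G : SimpleGraph ι) (S : Finset ι) (i : ι) : Finset ι :=
  S.filter fun j => (restrict G S).Reachable i j

/-- Connected component of `i` in `G`. -/
def component (G : SimpleGraph ι) (i : ι) : Finset ι := comp G Finset.univ i

/-- Myerson graph-restricted game: sum of `v` over the connected components
of the subgraph induced by `S`. -/
def restrictedGame (G : SimpleGraph ι) (v : Finset ι → ℝ) (S : Finset ι) : ℝ :=
  ∑ C ∈ S.image (comp G S), v C

/-- Myerson interaction index. -/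
def MI (G : SimpleGraph ι) (v : Finset ι → ℝ) (S : Finset ι) : ℝ :=
  SIdiv (restrictedGame G v) S

/-- The subgraph induced by `S` is connected. -/
def ConnectedOn (G : SimpleGraph ι) (S : Finset ι) : Prop :=
  ∀ i ∈ S, ∀ j ∈ S, (restrict G S).Reachable i j

/-- `R` is a minimal `T`-connecting set of nodes in `G`. -/
def MinimalConnecting (G : SimpleGraph ι) (T R : Finset ι) : Prop :=
  T ⊆ R ∧ ConnectedOn G R ∧ ∀ R' ⊂ R, ¬ (T ⊆ R' ∧ ConnectedOn G R')

/-- `i` is an intermediary of `T` in `G`. -/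
def Intermediary (G : SimpleGraph ι) (T : Finset ι) (i : ι) : Prop :=
  ∃ R, MinimalConnecting G T R ∧ i ∈ R ∧ i ∉ T

/-- `i` is an essential intermediary of `T` in `G`. -/
def EssentialIntermediary (G : SimpleGraph ι) (T : Finset ι) (i : ι) : Prop :=
  i ∉ T ∧ ∀ R, MinimalConnecting G T R → i ∈ R

/-- `i` is a null player in game `v`. -/
def NullPlayer (v : Finset ι → ℝ) (i : ι) : Prop :=
  ∀ S : Finset ι, i ∉ S → v (insert i S) = v S

/-- `i` is a graph null player in the communication situation `(N, v, G)`. -/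
def GraphNull (G : SimpleGraph ι) (v : Finset ι → ℝ) (i : ι) : Prop :=
  NullPlayer v i ∧
    ∀ j k : ι, j ≠ k → j ≠ i → k ≠ i → Intermediary G {j, k} i →
      NullPlayer v j ∨ NullPlayer v k

/-- `P` is a veto partnership in game `v`. -/
def VetoPartnership (v : Finset ι → ℝ) (P : Finset ι) : Prop :=
  P.Nonempty ∧ ∀ T : Finset ι, T ⊆ Finset.univ \ P →
    v T = 0 ∧ ∀ S ⊂ P, v (T ∪ S) = 0

/-- `GP` is a veto graph partnership in `(N, v, G)`. -/
def VetoGraphPartnership (G : SimpleGraph ι) (v : Finset ι → ℝ) (GP : Finset ι) : Prop :=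
  GP.Nonempty ∧ ∃ P, VetoPartnership v P ∧
    ∀ i ∈ GP, i ∈ P ∨ EssentialIntermediary G P i

/-- Cutnodes of `S`: nodes of `S` whose removal disconnects the induced subgraph on `S`. -/
def cutnodes (G : SimpleGraph ι) (S : Finset ι) : Finset ι :=
  S.filter fun i => ¬ ConnectedOn G (S.erase i)

end TUGame

namespace TUGame

variable {ι : Type*}

theorem dividend_add (f g : Finset ι → ℝ) (T : Finset ι) :
    dividend (fun R => f R + g R) T = dividend f T + dividend g T := by
  simp only [dividend, mul_add, Finset.sum_add_distrib]

theorem dividend_empty (w : Finset ι → ℝ) : dividend w ∅ = w ∅ := by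
  simp [dividend]

theorem restrict_mono (G : SimpleGraph ι) {S T : Finset ι} (h : S ⊆ T) :
    restrict G S ≤ restrict G T :=
  fun _ _ hij => ⟨hij.1, h hij.2.1, h hij.2.2⟩

def IsAdjClosed (G : SimpleGraph ι) (A : Finset ι) : Prop :=
  ∀ i j, i ∈ A → G.Adj i j → j ∈ A

variable [DecidableEq ι]

theorem dividend_eq_zero_of_nullPlayer {w : Finset ι → ℝ} {T : Finset ι} {j : ι}
    (hj : NullPlayer w j) (hjT : j ∈ T) : dividend w T = 0 := by
  have hjT' : j ∉ T.erase j := Finset.notMem_erase j T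
  rw [dividend, ← Finset.insert_erase hjT, Finset.sum_powerset_insert hjT',
    ← Finset.sum_add_distrib]
  refine Finset.sum_eq_zero fun R hR => ?_
  have hjR : j ∉ R := fun h => hjT' (Finset.mem_powerset.1 hR h)
  have hRT : R.card < (T.erase j).card + 1 :=
    Nat.lt_succ_of_le (Finset.card_le_card (Finset.mem_powerset.1 hR))
  rw [hj R hjR, Finset.card_insert_of_notMem hjR, Finset.card_insert_of_notMem hjT',
    show (T.erase j).card + 1 - R.card = (T.erase j).card - R.card + 1 by omega,
    show (T.erase j).card + 1 - (R.card + 1) = (T.erase j).card - R.card by omega, pow_succ]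
  ring

theorem sum_Icc_neg_one_pow_card_sub {R S : Finset ι} (hRS : R ⊆ S) :
    ∑ T ∈ Finset.Icc R S, (-1 : ℝ) ^ (T.card - R.card) = if R = S then 1 else 0 := by
  have hdisj : ∀ U ∈ (S \ R).powerset, Disjoint R U := fun U hU =>
    (Finset.disjoint_of_subset_left (Finset.mem_powerset.1 hU) Finset.sdiff_disjoint).symm
  have hinj : Set.InjOn (R ∪ ·) ((S \ R).powerset : Set (Finset ι)) := fun U hU U' hU' h => by
    simpa [Finset.union_sdiff_cancel_left (hdisj U hU), Finset.union_sdiff_cancel_left (hdisj U' hU')]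
      using congrArg (· \ R) h
  have hiff : R = S ↔ S \ R = ∅ := ⟨fun h => h ▸ Finset.sdiff_self S,
    fun h => hRS.antisymm (Finset.sdiff_eq_empty_iff_subset.1 h)⟩
  rw [Finset.Icc_eq_image_powerset hRS, Finset.sum_image hinj]
  calc ∑ U ∈ (S \ R).powerset, (-1 : ℝ) ^ ((R ∪ U).card - R.card)
      = ∑ U ∈ (S \ R).powerset, (-1 : ℝ) ^ U.card := by
        refine Finset.sum_congr rfl fun U hU => ?_
        rw [Finset.card_union_of_disjoint (hdisj U hU), Nat.add_sub_cancel_left]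
    _ = if R = S then 1 else 0 := by
        simp only [hiff]
        exact_mod_cast Finset.sum_powerset_neg_one_pow_card

theorem sum_powerset_dividend (w : Finset ι → ℝ) (S : Finset ι) :
    ∑ T ∈ S.powerset, dividend w T = w S := by
  calc ∑ T ∈ S.powerset, dividend w T
      = ∑ R ∈ S.powerset, ∑ T ∈ Finset.Icc R S, (-1 : ℝ) ^ (T.card - R.card) * w R := by
        refine Finset.sum_comm' fun T R => ?_
        simp only [Finset.mem_powerset, Finset.mem_Icc]
        exact ⟨fun h => ⟨⟨h.2, h.1⟩, h.2.trans h.1⟩, fun h => ⟨h.1.2, h.1.1⟩⟩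
    _ = ∑ R ∈ S.powerset, if R = S then w R else 0 := by
        refine Finset.sum_congr rfl fun R hR => ?_
        rw [← Finset.sum_mul, sum_Icc_neg_one_pow_card_sub (Finset.mem_powerset.1 hR), ite_mul,
          one_mul, zero_mul]
    _ = w S := by rw [Finset.sum_ite_eq', if_pos (Finset.mem_powerset_self S)]

def SplitsAlong (w : Finset ι → ℝ) (C : Finset ι) : Prop :=
  ∀ R, w R = w (R ∩ C) + w (R \ C)

namespace SplitsAlong

variable {w : Finset ι → ℝ} {C : Finset ι}

theorem apply_empty (hw : SplitsAlong w C) : w ∅ = 0 := by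
  simpa using hw ∅

theorem dividend_eq_zero (hw : SplitsAlong w C) {T : Finset ι} (hTC : ¬ T ⊆ C)
    (hT : (T ∩ C).Nonempty) : dividend w T = 0 := by
  obtain ⟨k, hkT, hkC⟩ := Finset.not_subset.1 hTC
  obtain ⟨j, hj⟩ := hT
  obtain ⟨hjT, hjC⟩ := Finset.mem_inter.1 hj
  have hk : NullPlayer (fun R => w (R ∩ C)) k := fun R _ => by
    simp only [Finset.insert_inter_of_notMem hkC]
  have hj : NullPlayer (fun R => w (R \ C)) j := fun R _ => by
    simp only [Finset.insert_sdiff_of_mem R hjC]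
  rw [show w = fun R => w (R ∩ C) + w (R \ C) from funext hw, dividend_add,
    dividend_eq_zero_of_nullPlayer hk hkT, dividend_eq_zero_of_nullPlayer hj hjT, add_zero]

end SplitsAlong

theorem IsAdjClosed.reachable_restrict_inter {G : SimpleGraph ι} {A : Finset ι}
    (hA : IsAdjClosed G A) {R : Finset ι} {x y : ι} (p : (restrict G R).Walk x y) (hx : x ∈ A) :
    (restrict G (R ∩ A)).Reachable x y ∧ y ∈ A := by
  induction p with
  | nil => exact ⟨.refl _, hx⟩
  | @cons a b c hab _ ih =>
    have hb : b ∈ A := hA a b hx hab.1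
    obtain ⟨hbc, hc⟩ := ih hb
    refine ⟨.trans (SimpleGraph.Adj.reachable ?_) hbc, hc⟩
    exact ⟨hab.1, Finset.mem_inter.2 ⟨hab.2.1, hx⟩, Finset.mem_inter.2 ⟨hab.2.2, hb⟩⟩

variable [Fintype ι]

theorem SIdiv_singleton (w : Finset ι → ℝ) (i : ι) :
    SIdiv w {i} = ∑ T ∈ Finset.univ.powerset, if i ∈ T then dividend w T / T.card else 0 := by
  rw [SIdiv, Finset.sum_filter]
  refine Finset.sum_congr rfl fun T _ => ?_
  by_cases hi : i ∈ T
  · have hT : T.card - 1 + 1 = T.card := Nat.sub_add_cancel (Finset.card_pos.2 ⟨i, hi⟩)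
    rw [if_pos (Finset.singleton_subset_iff.2 hi), if_pos hi, Finset.card_singleton, hT]
  · rw [if_neg (mt Finset.singleton_subset_iff.1 hi), if_neg hi]

theorem sum_SIdiv_singleton (w : Finset ι → ℝ) (C : Finset ι) :
    ∑ i ∈ C, SIdiv w {i} =
      ∑ T ∈ Finset.univ.powerset, (C ∩ T).card * (dividend w T / T.card) := by
  simp only [SIdiv_singleton]
  rw [Finset.sum_comm]
  refine Finset.sum_congr rfl fun T _ => ?_
  rw [← Finset.sum_filter, Finset.sum_const, Finset.filter_mem_eq_inter, nsmul_eq_mul]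

theorem SplitsAlong.sum_SIdiv_singleton {w : Finset ι → ℝ} {C : Finset ι}
    (hw : SplitsAlong w C) : ∑ i ∈ C, SIdiv w {i} = w C := by
  have hweight : ∀ T : Finset ι, ((C ∩ T).card : ℝ) * (dividend w T / T.card) =
      if T ⊆ C then dividend w T else 0 := by
    intro T
    by_cases hTC : T ⊆ C
    · rw [if_pos hTC, Finset.inter_eq_right.2 hTC]
      rcases T.eq_empty_or_nonempty with rfl | hT
      · simp [dividend_empty, hw.apply_empty]
      · field_simp [Finset.card_ne_zero.2 hT]
    · rw [if_neg hTC]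
      rcases (C ∩ T).eq_empty_or_nonempty with hCT | hCT
      · simp [hCT]
      · rw [hw.dividend_eq_zero hTC (Finset.inter_comm C T ▸ hCT), zero_div, mul_zero]
  calc ∑ i ∈ C, SIdiv w {i}
      = ∑ T ∈ Finset.univ.powerset, if T ⊆ C then dividend w T else 0 := by
        rw [TUGame.sum_SIdiv_singleton]
        exact Finset.sum_congr rfl fun T _ => hweight T
    _ = ∑ T ∈ C.powerset, dividend w T := by
        rw [← Finset.sum_filter]
        congr 1
        ext T
        simp
    _ = w C := sum_powerset_dividend w C

variable {G : SimpleGraph ι}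

theorem mem_comp_self {S : Finset ι} {j : ι} (hj : j ∈ S) : j ∈ comp G S j :=
  Finset.mem_filter.2 ⟨hj, .refl _⟩

namespace IsAdjClosed

variable {A : Finset ι}

theorem compl (hA : IsAdjClosed G A) : IsAdjClosed G Aᶜ := fun i j hi hij =>
  Finset.mem_compl.2 fun hj => Finset.mem_compl.1 hi (hA j i hj hij.symm)

theorem comp_inter (hA : IsAdjClosed G A) (R : Finset ι) {j : ι} (hj : j ∈ A) :
    comp G (R ∩ A) j = comp G R j := by
  ext k
  simp only [comp, Finset.mem_filter, Finset.mem_inter]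
  constructor
  · rintro ⟨⟨hkR, -⟩, hjk⟩
    exact ⟨hkR, hjk.mono (restrict_mono G Finset.inter_subset_left)⟩
  · rintro ⟨hkR, ⟨p⟩⟩
    obtain ⟨hjk, hkA⟩ := hA.reachable_restrict_inter p hj
    exact ⟨⟨hkR, hkA⟩, hjk⟩

theorem restrictedGame_splitsAlong (hA : IsAdjClosed G A) (v : Finset ι → ℝ) :
    SplitsAlong (restrictedGame G v) A := by
  intro R
  have hsplit : R ∩ A ∪ R \ A = R := sup_inf_sdiff R A
  have himage : R.image (comp G R) =
      (R ∩ A).image (comp G (R ∩ A)) ∪ (R \ A).image (comp G (R \ A)) := by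
    conv_lhs => rw [← hsplit, Finset.image_union]
    congr 1 <;> refine Finset.image_congr fun j hj => ?_
    · rw [hsplit]
      exact (hA.comp_inter R (Finset.mem_inter.1 hj).2).symm
    · rw [hsplit, Finset.sdiff_eq_inter_compl]
      exact (hA.compl.comp_inter R (Finset.mem_compl.2 (Finset.mem_sdiff.1 hj).2)).symm
  have hdisj : Disjoint ((R ∩ A).image (comp G (R ∩ A))) ((R \ A).image (comp G (R \ A))) := by
    refine Finset.disjoint_left.2 fun D hD hD' => ?_
    obtain ⟨j, hj, rfl⟩ := Finset.mem_image.1 hD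
    obtain ⟨k, -, hkj⟩ := Finset.mem_image.1 hD'
    have hjk : j ∈ comp G (R \ A) k := hkj ▸ mem_comp_self hj
    exact (Finset.mem_sdiff.1 (Finset.mem_of_mem_filter j hjk)).2 (Finset.mem_inter.1 hj).2
  rw [restrictedGame, himage, Finset.sum_union hdisj]
  rfl

end IsAdjClosed

theorem mem_component_iff {i j : ι} :
    j ∈ component G i ↔ (restrict G Finset.univ).Reachable i j := by
  simp [component, comp]

theorem isAdjClosed_component (G : SimpleGraph ι) (i : ι) : IsAdjClosed G (component G i) :=
  fun _ _ hj hjk => mem_component_iff.2 <| (mem_component_iff.1 hj).trans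
    (SimpleGraph.Adj.reachable ⟨hjk, Finset.mem_univ _, Finset.mem_univ _⟩)

theorem comp_component {i j : ι} (hj : j ∈ component G i) :
    comp G (component G i) j = component G i := by
  have h := (isAdjClosed_component G i).comp_inter Finset.univ hj
  rw [Finset.univ_inter] at h
  rw [h]
  ext k
  rw [← component, mem_component_iff, mem_component_iff]
  exact ⟨(mem_component_iff.1 hj).trans, (mem_component_iff.1 hj).symm.trans⟩

theorem restrictedGame_component (G : SimpleGraph ι) (v : Finset ι → ℝ) (i : ι) :
    restrictedGame G v (component G i) = v (component G i) := by
  rw [restrictedGame, Finset.image_congr fun _ hj => comp_component hj,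
    Finset.image_const ⟨i, mem_component_iff.2 (.refl _)⟩, Finset.sum_singleton]

end TUGame

open TUGame

/-- the Myerson interaction index satisfies component efficiency. -/
theorem MI_component_efficiency {ι : Type*} [Fintype ι] [DecidableEq ι]
    (G : SimpleGraph ι) (v : Finset ι → ℝ) (C : Finset ι)
    (hC : ∃ i : ι, C = component G i) :
    ∑ i ∈ C, MI G v {i} = v C := by
  obtain ⟨i, rfl⟩ := hC
  calc ∑ j ∈ component G i, MI G v {j}
      = restrictedGame G v (component G i) :=
        ((isAdjClosed_component G i).restrictedGame_splitsAlong v).sum_SIdiv_singleton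
    _ = v (component G i) := restrictedGame_component G v i
end
end

section
/- If i is a null player in game w, then Δ_w(T) = 0 for every coalition T containing i with |T| ≥ 2. -/
open Finset

noncomputable section
open scoped Classical

namespace TUGame

variable {ι : Type*}

def marginal [DecidableEq ι] (v : Finset ι → ℝ) (i : ι) (S : Finset ι) : ℝ :=
  v (insert i S) - v S

theorem dividend_zero (T : Finset ι) : dividend (0 : Finset ι → ℝ) T = 0 := by
  simp [dividend]

variable [DecidableEq ι]

/-- The terms of `R ⊆ S` and of `insert i R` carry opposite signs. -/
theorem dividend_insert (v : Finset ι → ℝ) {i : ι} {S : Finset ι} (hi : i ∉ S) :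
    dividend v (insert i S) = dividend (marginal v i) S := by
  unfold dividend marginal
  rw [sum_powerset_insert hi, ← sum_add_distrib]
  refine sum_congr rfl fun R hR => ?_
  have hiR : i ∉ R := fun hiR => hi (mem_powerset.mp hR hiR)
  have hRS : R.card ≤ S.card := card_le_card (mem_powerset.mp hR)
  rw [card_insert_of_notMem hi, card_insert_of_notMem hiR, Nat.add_sub_add_right,
    Nat.succ_sub hRS, pow_succ]
  ring

theorem NullPlayer.marginal_eq_zero {v : Finset ι → ℝ} {i : ι} (h : NullPlayer v i) :
    marginal v i = 0 := by
  funext S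
  by_cases hiS : i ∈ S
  · simp [marginal, insert_eq_of_mem hiS]
  · simp [marginal, h S hiS]

end TUGame

open TUGame

theorem dividend_null_player_general {ι : Type*} [DecidableEq ι]
    (w : Finset ι → ℝ) (i : ι) (h : NullPlayer w i)
    (T : Finset ι) (hiT : i ∈ T) :
    dividend w T = 0 := by
  rw [← insert_erase hiT, dividend_insert w (notMem_erase i T), h.marginal_eq_zero,
    dividend_zero]

/-- Harsanyi dividends of coalitions of size at least two
containing a null player vanish. -/
theorem dividend_null_player {ι : Type*} [Fintype ι] [DecidableEq ι]
    (w : Finset ι → ℝ) (i : ι) (h : NullPlayer w i) (hwi : w {i} = 0)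
    (T : Finset ι) (hiT : i ∈ T) (hT : 2 ≤ T.card) :
    dividend w T = 0 :=
  dividend_null_player_general w i h T hiT
end
end
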